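/- arXiv:1803.11543 — 4 statements merged into one kernel-verified Lean document; each statement's English description precedes it below -/
import Mathlib

section
/- Let L : ℝⁿ → ℝ be given by L(p) = Q₀ + Σᵢ Qᵢ pᵢ + Σ_{i,j} Q_{ij} pᵢ pⱼ + Σ_{i,j,k} Q_{ijk} pᵢ pⱼ pₖ over the hyper-rectangle P = Π [aᵢ, bᵢ]. If for every coordinate i and every vertex u of P the second partial derivative ∂²L/∂pᵢ²(u) = 2Q_{ii} + 2Σⱼ (Q_{jii} + Q_{iji} + Q_{iij}) uⱼ ≥ 0, then the maximum of L over P is attained at a vertex of P. -/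
open Finset


private lemma master {n : ℕ} (Q0 : ℝ) (Q1 : Fin n → ℝ) (Q2 : Fin n → Fin n → ℝ)
    (Q3 : Fin n → Fin n → Fin n → ℝ) (L : (Fin n → ℝ) → ℝ)
    (hL : ∀ p, L p = Q0 + ∑ i, Q1 i * p i + ∑ i, ∑ j, Q2 i j * p i * p j
        + ∑ i, ∑ j, ∑ k, Q3 i j k * p i * p j * p k)
    (q : Fin n → ℝ) (i : Fin n) (α β t : ℝ) :
    (β - α) * L (Function.update q i t)
      = (β - t) * L (Function.update q i α) + (t - α) * L (Function.update q i β)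
        - (t - α) * (β - t) * (β - α) *
          ((2 * Q2 i i + 2 * ∑ j, (Q3 j i i + Q3 i j i + Q3 i i j) *
            Function.update q i ((α + β + t) / 3) j) / 2) := by
  have e : ∀ (τ : ℝ) (j : Fin n), Function.update q i τ j = if j = i then τ else q j :=
    fun τ j => Function.update_apply q i τ j
  rw [hL, hL, hL]
  have I1 : (β - α) * (∑ j, Q1 j * Function.update q i t j)
      = (β - t) * (∑ j, Q1 j * Function.update q i α j)
        + (t - α) * (∑ j, Q1 j * Function.update q i β j) := by
    simp only [Finset.mul_sum, ← Finset.sum_add_distrib]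
    refine Finset.sum_congr rfl fun j _ => ?_
    by_cases h : j = i <;> simp [e, h] <;> ring
  have I2 : (β - α) * (∑ j, ∑ k, Q2 j k * Function.update q i t j * Function.update q i t k)
        + (t - α) * (β - t) * (β - α) * (∑ j, ∑ k, if j = i ∧ k = i then Q2 j k else 0)
      = (β - t) * (∑ j, ∑ k, Q2 j k * Function.update q i α j * Function.update q i α k)
        + (t - α) * (∑ j, ∑ k, Q2 j k * Function.update q i β j * Function.update q i β k) := by
    simp only [Finset.mul_sum, ← Finset.sum_add_distrib]
    refine Finset.sum_congr rfl fun j _ => ?_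
    refine Finset.sum_congr rfl fun k _ => ?_
    by_cases hj : j = i <;> by_cases hk : k = i <;> simp [e, hj, hk] <;> ring
  have I3 : (β - α) * (∑ j, ∑ k, ∑ l, Q3 j k l * Function.update q i t j *
          Function.update q i t k * Function.update q i t l)
        + (t - α) * (β - t) * (β - α) * (∑ j, ∑ k, ∑ l,
            ((if k = i ∧ l = i then Q3 j k l * Function.update q i ((α + β + t) / 3) j else 0)
            + (if j = i ∧ l = i then Q3 j k l * Function.update q i ((α + β + t) / 3) k else 0)
            + (if j = i ∧ k = i then Q3 j k l * Function.update q i ((α + β + t) / 3) l else 0)))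
      = (β - t) * (∑ j, ∑ k, ∑ l, Q3 j k l * Function.update q i α j *
          Function.update q i α k * Function.update q i α l)
        + (t - α) * (∑ j, ∑ k, ∑ l, Q3 j k l * Function.update q i β j *
          Function.update q i β k * Function.update q i β l) := by
    simp only [Finset.mul_sum, ← Finset.sum_add_distrib]
    refine Finset.sum_congr rfl fun j _ => ?_
    refine Finset.sum_congr rfl fun k _ => ?_
    refine Finset.sum_congr rfl fun l _ => ?_
    by_cases hj : j = i <;> by_cases hk : k = i <;> by_cases hl : l = i <;>
      simp [e, hj, hk, hl] <;> ring
  have C2 : (∑ j, ∑ k, if j = i ∧ k = i then Q2 j k else 0) = Q2 i i := by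
    simp [ite_and, Finset.sum_ite_eq]
  have C3 : (∑ j, ∑ k, ∑ l,
        ((if k = i ∧ l = i then Q3 j k l * Function.update q i ((α + β + t) / 3) j else 0)
        + (if j = i ∧ l = i then Q3 j k l * Function.update q i ((α + β + t) / 3) k else 0)
        + (if j = i ∧ k = i then Q3 j k l * Function.update q i ((α + β + t) / 3) l else 0)))
      = ∑ j, (Q3 j i i + Q3 i j i + Q3 i i j) * Function.update q i ((α + β + t) / 3) j := by
    simp [Finset.sum_add_distrib, ite_and, Finset.sum_ite_eq, add_mul]
  linear_combination I1 + I2 + I3 - (t - α) * (β - t) * (β - α) * C2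
    - (t - α) * (β - t) * (β - α) * C3

theorem cubic_scalar_max_at_vertex (n : ℕ) (a b : Fin n → ℝ) (hab : a ≤ b)
    (Q0 : ℝ) (Q1 : Fin n → ℝ) (Q2 : Fin n → Fin n → ℝ) (Q3 : Fin n → Fin n → Fin n → ℝ)
    (L : (Fin n → ℝ) → ℝ)
    (hL : ∀ p, L p = Q0 + ∑ i, Q1 i * p i + ∑ i, ∑ j, Q2 i j * p i * p j
        + ∑ i, ∑ j, ∑ k, Q3 i j k * p i * p j * p k)
    (hconv : ∀ i : Fin n, ∀ u : Fin n → ℝ, (∀ j, u j = a j ∨ u j = b j) →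
        0 ≤ 2 * Q2 i i + 2 * ∑ j, (Q3 j i i + Q3 i j i + Q3 i i j) * u j) :
    ∃ u : Fin n → ℝ, (∀ j, u j = a j ∨ u j = b j) ∧
      ∀ p ∈ Set.Icc a b, L p ≤ L u := by
  have master := master Q0 Q1 Q2 Q3 L hL
  classical
  -- affine extension of hconv to the whole box
  have hconv' : ∀ (i : Fin n), ∀ u ∈ Set.Icc a b,
      0 ≤ 2 * Q2 i i + 2 * ∑ j, (Q3 j i i + Q3 i j i + Q3 i i j) * u j := by
    intro i u hu
    set D : Fin n → ℝ := fun j => Q3 j i i + Q3 i j i + Q3 i i j with hD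
    set v : Fin n → ℝ := fun j => if 0 ≤ D j then a j else b j with hv
    have hvert : ∀ j, v j = a j ∨ v j = b j := fun j => by
      by_cases h : 0 ≤ D j <;> simp [hv, h]
    have h1 := hconv i v hvert
    have h2 : ∑ j, D j * v j ≤ ∑ j, D j * u j := by
      refine Finset.sum_le_sum fun j _ => ?_
      by_cases h : 0 ≤ D j
      · simp only [hv, if_pos h]
        exact mul_le_mul_of_nonneg_left (hu.1 j) h
      · simp only [hv, if_neg h]
        exact mul_le_mul_of_nonpos_left (hu.2 j) (le_of_not_ge h)
    have h1' : 0 ≤ 2 * Q2 i i + 2 * ∑ j, D j * v j := h1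
    linarith
  -- update stays in the box
  have hupd : ∀ q ∈ Set.Icc a b, ∀ (i : Fin n) (τ : ℝ), a i ≤ τ → τ ≤ b i →
      Function.update q i τ ∈ Set.Icc a b := by
    intro q hq i τ h1 h2
    constructor <;> intro j
    · by_cases h : j = i
      · subst h; simpa using h1
      · rw [Function.update_of_ne h]; exact hq.1 j
    · by_cases h : j = i
      · subst h; simpa using h2
      · rw [Function.update_of_ne h]; exact hq.2 j
  -- one-coordinate step
  have step : ∀ q ∈ Set.Icc a b, ∀ i : Fin n,
      L q ≤ max (L (Function.update q i (a i))) (L (Function.update q i (b i))) := by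
    intro q hq i
    have hM := master q i (a i) (b i) (q i)
    rw [Function.update_eq_self] at hM
    have ht1 : a i ≤ q i := hq.1 i
    have ht2 : q i ≤ b i := hq.2 i
    have habi : a i ≤ b i := hab i
    have hs1 : a i ≤ (a i + b i + q i) / 3 := by linarith
    have hs2 : (a i + b i + q i) / 3 ≤ b i := by linarith
    have hmem := hupd q hq i _ hs1 hs2
    have hH := hconv' i _ hmem
    rcases eq_or_lt_of_le habi with h | h
    · have hqa : q i = a i := le_antisymm (h ▸ ht2) ht1
      have : Function.update q i (a i) = q := by rw [← hqa, Function.update_eq_self]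
      exact (congrArg L this).symm.le.trans (le_max_left _ _)
    · set A := L (Function.update q i (a i)) with hA
      set B := L (Function.update q i (b i)) with hB
      have hAM : A ≤ max A B := le_max_left _ _
      have hBM : B ≤ max A B := le_max_right _ _
      have hN : 0 ≤ (q i - a i) * (b i - q i) * (b i - a i) *
          ((2 * Q2 i i + 2 * ∑ j, (Q3 j i i + Q3 i j i + Q3 i i j) *
            Function.update q i ((a i + b i + q i) / 3) j) / 2) := by
        apply mul_nonneg
        · apply mul_nonneg (mul_nonneg (by linarith) (by linarith)) (by linarith)
        · linarith
      have hAM' : (b i - q i) * A ≤ (b i - q i) * max A B :=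
        mul_le_mul_of_nonneg_left hAM (by linarith)
      have hBM' : (q i - a i) * B ≤ (q i - a i) * max A B :=
        mul_le_mul_of_nonneg_left hBM (by linarith)
      have h2 : (b i - a i) * L q ≤ (b i - a i) * max A B := by nlinarith [hM]
      exact le_of_mul_le_mul_left h2 (by linarith)
  -- induction pinning coordinates
  have ind : ∀ m : ℕ, ∀ q ∈ Set.Icc a b, ∃ r ∈ Set.Icc a b,
      (∀ j : Fin n, (j : ℕ) < m → r j = a j ∨ r j = b j) ∧ L q ≤ L r := by
    intro m
    induction m with
    | zero => exact fun q hq => ⟨q, hq, fun j h => absurd h (Nat.not_lt_zero _), le_refl _⟩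
    | succ m ih =>
      intro q hq
      obtain ⟨r, hr, hpin, hle⟩ := ih q hq
      by_cases hm : m < n
      · set i : Fin n := ⟨m, hm⟩ with hi
        have hstep := step r hr i
        have hpin' : ∀ (c : ℝ), ∀ j : Fin n, (j : ℕ) < m + 1 → j ≠ i →
            Function.update r i c j = a j ∨ Function.update r i c j = b j := by
          intro c j hj hji
          rw [Function.update_of_ne hji]
          refine hpin j ?_
          have : (j : ℕ) ≠ m := fun hc => hji (Fin.ext (by simp [hc, hi]))
          omega
        rcases le_total (L (Function.update r i (a i))) (L (Function.update r i (b i))) with hc | hc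
        · refine ⟨Function.update r i (b i), hupd r hr i _ (hab i) (le_refl _), ?_, ?_⟩
          · intro j hj
            by_cases hji : j = i
            · subst hji; right; simp
            · exact hpin' _ j hj hji
          · calc L q ≤ L r := hle
              _ ≤ _ := hstep
              _ = L (Function.update r i (b i)) := max_eq_right hc
        · refine ⟨Function.update r i (a i), hupd r hr i _ (le_refl _) (hab i), ?_, ?_⟩
          · intro j hj
            by_cases hji : j = i
            · subst hji; left; simp
            · exact hpin' _ j hj hji
          · calc L q ≤ L r := hle
              _ ≤ _ := hstep
              _ = L (Function.update r i (a i)) := max_eq_left hc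
      · exact ⟨r, hr, fun j _ => hpin j (lt_of_lt_of_le j.isLt (le_of_not_gt hm)), hle⟩
  -- take the best vertex
  set φ : (Fin n → Bool) → (Fin n → ℝ) := fun s j => if s j then b j else a j with hφ
  have hφvert : ∀ s j, φ s j = a j ∨ φ s j = b j := fun s j => by
    by_cases h : s j <;> simp [hφ, h]
  obtain ⟨s₀, -, hs₀⟩ := Finset.exists_max_image (Finset.univ : Finset (Fin n → Bool))
    (fun s => L (φ s)) ⟨default, Finset.mem_univ _⟩
  refine ⟨φ s₀, fun j => hφvert s₀ j, ?_⟩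
  intro p hp
  obtain ⟨r, hr, hvert, hle⟩ := ind n p hp
  have hrvert : ∀ j, r j = a j ∨ r j = b j := fun j => hvert j j.isLt
  set s : Fin n → Bool := fun j => decide (r j = b j) with hs
  have hrs : φ s = r := by
    funext j
    by_cases h : r j = b j
    · simp [hφ, hs, h]
    · have h' := (hrvert j).resolve_right h
      show (if (decide (r j = b j) : Bool) then b j else a j) = r j
      rw [decide_eq_false h]
      simpa using h'.symm
  calc L p ≤ L r := hle
    _ = L (φ s) := by rw [hrs]
    _ ≤ L (φ s₀) := hs₀ s (Finset.mem_univ _)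
end

section
/- Let L : ℝⁿ → 𝕊^m (symmetric m×m real matrices) be a cubic matrix polynomial L(p) = Q₀ + Σᵢ Qᵢ pᵢ + Σ_{i,j} Q_{ij} pᵢpⱼ + Σ_{i,j,k} Q_{ijk} pᵢpⱼpₖ on a hyper-rectangle P with vertex set 𝒫. If Q_{ii} + Σⱼ (Q_{jii} + Q_{iji} + Q_{iij}) uⱼ ⪰ 0 for all i and all u ∈ 𝒫, then for every p ∈ P and every vector y, yᵀ L(p) y ≤ max over vertices u ∈ 𝒫 of yᵀ L(u) y. -/
open Finset Matrix

private lemma aux_cubic_deriv (A B C D : ℝ) :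
    deriv (fun t : ℝ => A + B*t + C*t^2 + D*t^3) = fun t => B + 2*C*t + 3*D*t^2 := by
  funext t
  have h : HasDerivAt (fun t : ℝ => A + B*t + C*t^2 + D*t^3) (B + 2*C*t + 3*D*t^2) t := by
    have h1 : HasDerivAt (fun t : ℝ => A + B*t + C*t^2 + D*t^3)
        (0 + B*1 + C*(2*t^1) + D*(3*t^2)) t := by
      exact (((hasDerivAt_const t A).add ((hasDerivAt_id t).const_mul B)).add
        ((hasDerivAt_pow 2 t).const_mul C)).add ((hasDerivAt_pow 3 t).const_mul D)
    convert h1 using 1; ring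
  exact h.deriv

private lemma aux_cubic_le_max (A B C D l r : ℝ) (hlr : l ≤ r)
    (h2 : ∀ t ∈ Set.Icc l r, 0 ≤ 2*C + 6*D*t) :
    ∀ t ∈ Set.Icc l r, A+B*t+C*t^2+D*t^3 ≤ max (A+B*l+C*l^2+D*l^3) (A+B*r+C*r^2+D*r^3) := by
  intro t ht
  set g : ℝ → ℝ := fun t => A + B*t + C*t^2 + D*t^3 with hg
  have hd1 : deriv g = fun t => B + 2*C*t + 3*D*t^2 := aux_cubic_deriv A B C D
  have hd2 : deriv (deriv g) = fun t => 2*C + 6*D*t := by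
    rw [hd1]
    have h := aux_cubic_deriv B (2*C) (3*D) 0
    rw [show (fun t:ℝ => B + 2*C*t + 3*D*t^2) = (fun t:ℝ => B + (2*C)*t + (3*D)*t^2 + 0*t^3) by
      funext t; ring, h]
    funext t; ring
  have hconv : ConvexOn ℝ (Set.Icc l r) g := by
    apply convexOn_of_deriv2_nonneg (convex_Icc l r)
    · exact (Continuous.continuousOn (by fun_prop))
    · intro x hx
      exact (differentiable_const A |>.add ((differentiable_id).const_mul B) |>.add
        ((differentiable_pow 2).const_mul C) |>.add
        ((differentiable_pow 3).const_mul D)).differentiableAt.differentiableWithinAt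
    · rw [hd1]
      intro x hx
      exact ((differentiable_const B |>.add ((differentiable_id).const_mul (2*C)) |>.add
        ((differentiable_pow 2).const_mul (3*D)))).differentiableAt.differentiableWithinAt
    · intro x hx
      have hx' : x ∈ Set.Icc l r := interior_subset hx
      have := h2 x hx'
      show 0 ≤ deriv (deriv g) x
      rw [hd2]
      exact this
  have := hconv.le_on_segment (Set.left_mem_Icc.2 hlr) (Set.right_mem_Icc.2 hlr)
    (by rw [segment_eq_Icc hlr]; exact ht)
  simpa [hg] using this

private lemma aux_exists_vertex_ge {n : ℕ} (a b : Fin n → ℝ) (hab : a ≤ b)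
    (F : (Fin n → ℝ) → ℝ)
    (hstep : ∀ p ∈ Set.Icc a b, ∀ i : Fin n, p i ≠ a i → p i ≠ b i →
      ∃ t, (t = a i ∨ t = b i) ∧ F p ≤ F (Function.update p i t)) :
    ∀ p ∈ Set.Icc a b, ∃ u, (∀ j, u j = a j ∨ u j = b j) ∧ F p ≤ F u := by
  suffices h : ∀ k : ℕ, ∀ p ∈ Set.Icc a b,
      (univ.filter (fun j => p j ≠ a j ∧ p j ≠ b j)).card ≤ k →
      ∃ u, (∀ j, u j = a j ∨ u j = b j) ∧ F p ≤ F u by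
    intro p hp
    exact h _ p hp le_rfl
  intro k
  induction k with
  | zero =>
    intro p hp hc
    refine ⟨p, ?_, le_rfl⟩
    intro j
    by_contra hj
    push_neg at hj
    have : j ∈ univ.filter (fun j => p j ≠ a j ∧ p j ≠ b j) := by
      simp [hj.1, hj.2]
    have := Finset.card_pos.mpr ⟨j, this⟩
    omega
  | succ k ih =>
    intro p hp hc
    by_cases hver : ∀ j, p j = a j ∨ p j = b j
    · exact ⟨p, hver, le_rfl⟩
    push_neg at hver
    obtain ⟨i, hi1, hi2⟩ := hver
    obtain ⟨t, ht, hF⟩ := hstep p hp i hi1 hi2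
    set p' := Function.update p i t with hp'
    have hp'mem : p' ∈ Set.Icc a b := by
      constructor <;> intro j <;> by_cases hji : j = i
      · subst hji; rw [hp', Function.update_self]
        rcases ht with h | h <;> simp [h, hab j]
      · rw [hp', Function.update_of_ne hji]; exact hp.1 j
      · subst hji; rw [hp', Function.update_self]
        rcases ht with h | h <;> simp [h, hab j]
      · rw [hp', Function.update_of_ne hji]; exact hp.2 j
    have hsubset : (univ.filter (fun j => p' j ≠ a j ∧ p' j ≠ b j)) ⊆
        (univ.filter (fun j => p j ≠ a j ∧ p j ≠ b j)).erase i := by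
      intro j hj
      simp only [mem_filter, mem_univ, true_and] at hj
      have hji : j ≠ i := by
        intro h; subst h
        rw [hp', Function.update_self] at hj
        rcases ht with h | h
        · exact hj.1 h
        · exact hj.2 h
      rw [hp', Function.update_of_ne hji] at hj
      simp [Finset.mem_erase, hji, hj.1, hj.2]
    have hcard : (univ.filter (fun j => p' j ≠ a j ∧ p' j ≠ b j)).card ≤ k := by
      have hi : i ∈ univ.filter (fun j => p j ≠ a j ∧ p j ≠ b j) := by simp [hi1, hi2]
      calc _ ≤ ((univ.filter (fun j => p j ≠ a j ∧ p j ≠ b j)).erase i).card :=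
            Finset.card_le_card hsubset
        _ = (univ.filter (fun j => p j ≠ a j ∧ p j ≠ b j)).card - 1 :=
            Finset.card_erase_of_mem hi
        _ ≤ k := by omega
    obtain ⟨u, hu, hFu⟩ := ih p' hp'mem hcard
    exact ⟨u, hu, hF.trans hFu⟩

private lemma aux_sum_update_split {n : ℕ} (p : Fin n → ℝ) (i : Fin n) (t : ℝ)
    (f : Fin n → ℝ → ℝ) :
    ∑ j, f j (Function.update p i t j) = f i t + ∑ j ∈ univ.erase i, f j (p j) := by
  rw [← Finset.add_sum_erase univ _ (mem_univ i), Function.update_self]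
  congr 1
  exact Finset.sum_congr rfl fun j hj => by
    rw [Function.update_of_ne (Finset.mem_erase.mp hj).1]

private lemma aux_sum_update_linear {n : ℕ} (q : Fin n → ℝ) (i : Fin n) (t : ℝ)
    (B : Fin n → ℝ) :
    ∑ j, Function.update q i t j * B j = (∑ j, q j * B j) + (t - q i) * B i := by
  have h1 := aux_sum_update_split q i t (fun j x => x * B j)
  have h2 : ∑ j, q j * B j = q i * B i + ∑ j ∈ univ.erase i, q j * B j :=
    (Finset.add_sum_erase _ _ (mem_univ i)).symm
  rw [h1, h2]; ring

private lemma aux_affine_nonneg {n : ℕ} (a b : Fin n → ℝ) (hab : a ≤ b) (A : ℝ)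
    (B : Fin n → ℝ)
    (h : ∀ u : Fin n → ℝ, (∀ j, u j = a j ∨ u j = b j) → 0 ≤ A + ∑ j, u j * B j) :
    ∀ p ∈ Set.Icc a b, 0 ≤ A + ∑ j, p j * B j := by
  intro p hp
  have key := aux_exists_vertex_ge a b hab (fun p => -(A + ∑ j, p j * B j)) ?_ p hp
  · obtain ⟨u, hu, hle⟩ := key
    have h2 := h u hu
    simp only [neg_le_neg_iff] at hle
    linarith
  · intro q hq i hia hib
    refine ⟨if 0 ≤ B i then a i else b i, ?_, ?_⟩
    · split <;> simp
    · simp only [neg_le_neg_iff]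
      rw [aux_sum_update_linear q i _ B]
      have ha := hq.1 i
      have hb := hq.2 i
      split <;> rename_i hBi
      · nlinarith
      · nlinarith

private lemma aux_expand_cubic {n : ℕ} (c0 : ℝ) (c1 : Fin n → ℝ) (c2 : Fin n → Fin n → ℝ)
    (c3 : Fin n → Fin n → Fin n → ℝ) (p : Fin n → ℝ) (i : Fin n) (t : ℝ) :
    (c0 + ∑ j, c1 j * Function.update p i t j
      + ∑ j, ∑ k, c2 j k * (Function.update p i t j * Function.update p i t k)
      + ∑ j, ∑ k, ∑ l, c3 j k l *
          (Function.update p i t j * Function.update p i t k * Function.update p i t l))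
    = (c0 + ∑ j, c1 j * p j + ∑ j, ∑ k, c2 j k * (p j * p k)
        + ∑ j, ∑ k, ∑ l, c3 j k l * (p j * p k * p l))
      + (c1 i + ∑ j, (c2 i j + c2 j i) * p j
          + ∑ j, ∑ k, (c3 i j k + c3 j i k + c3 j k i) * (p j * p k)) * (t - p i)
      + (c2 i i + ∑ j, (c3 j i i + c3 i j i + c3 i i j) * p j) * (t - p i)^2
      + c3 i i i * (t - p i)^3 := by
  have hupd : Function.update p i t = fun j => p j + (t - p i) * (if j = i then 1 else 0) := by
    funext j
    by_cases h : j = i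
    · subst h; simp
    · simp [Function.update_of_ne h, h]
  rw [hupd]
  simp only [mul_add, add_mul, mul_ite, ite_mul, mul_zero, zero_mul, mul_one, one_mul,
    Finset.sum_add_distrib, Finset.mul_sum, Finset.sum_ite_eq', mem_univ, if_true,
    Finset.sum_ite_eq, add_zero, zero_add, Finset.sum_ite_irrel, Finset.sum_const_zero]
  generalize t - p i = s
  have e1 : ∑ x, c2 i x * (s * p x) = (∑ x, c2 i x * p x) * s := by
    rw [Finset.sum_mul]; exact Finset.sum_congr rfl fun x _ => by ring
  have e2 : ∑ x, c2 x i * (p x * s) = (∑ x, c2 x i * p x) * s := by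
    rw [Finset.sum_mul]; exact Finset.sum_congr rfl fun x _ => by ring
  have e3 : ∑ x, ∑ x1, c3 i x x1 * (s * p x * p x1)
      = (∑ x, ∑ x1, c3 i x x1 * (p x * p x1)) * s := by
    rw [Finset.sum_mul]
    refine Finset.sum_congr rfl fun x _ => ?_
    rw [Finset.sum_mul]; exact Finset.sum_congr rfl fun x1 _ => by ring
  have e4 : ∑ x, ∑ x1, c3 x i x1 * (p x * s * p x1)
      = (∑ x, ∑ x1, c3 x i x1 * (p x * p x1)) * s := by
    rw [Finset.sum_mul]
    refine Finset.sum_congr rfl fun x _ => ?_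
    rw [Finset.sum_mul]; exact Finset.sum_congr rfl fun x1 _ => by ring
  have e5 : ∑ x, c3 i i x * (s * s * p x) = (∑ x, c3 i i x * p x) * s^2 := by
    rw [Finset.sum_mul]; exact Finset.sum_congr rfl fun x _ => by ring
  have e6 : ∑ x, ∑ x1, c3 x x1 i * (p x * p x1 * s)
      = (∑ x, ∑ x1, c3 x x1 i * (p x * p x1)) * s := by
    rw [Finset.sum_mul]
    refine Finset.sum_congr rfl fun x _ => ?_
    rw [Finset.sum_mul]; exact Finset.sum_congr rfl fun x1 _ => by ring
  have e7 : ∑ x, c3 i x i * (s * p x * s) = (∑ x, c3 i x i * p x) * s^2 := by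
    rw [Finset.sum_mul]; exact Finset.sum_congr rfl fun x _ => by ring
  have e8 : ∑ x, c3 x i i * (p x * s * s) = (∑ x, c3 x i i * p x) * s^2 := by
    rw [Finset.sum_mul]; exact Finset.sum_congr rfl fun x _ => by ring
  rw [e1, e2, e3, e4, e5, e6, e7, e8]
  ring

private lemma aux_dot_sum_mulVec {ι : Type*} [Fintype ι] {m : ℕ} (y : Fin m → ℝ)
    (M : ι → Matrix (Fin m) (Fin m) ℝ) :
    y ⬝ᵥ (∑ i, M i).mulVec y = ∑ i, y ⬝ᵥ (M i).mulVec y := by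
  have h1 : (∑ i, M i).mulVec y = ∑ i, (M i).mulVec y := by
    funext j
    simp only [Matrix.mulVec, dotProduct, Finset.sum_apply, Matrix.sum_apply, Finset.sum_mul]
    exact Finset.sum_comm
  rw [h1]
  simp only [dotProduct, Finset.sum_apply, Finset.mul_sum]
  exact Finset.sum_comm

private lemma aux_dot_smul_mulVec {m : ℕ} (y : Fin m → ℝ) (c : ℝ)
    (M : Matrix (Fin m) (Fin m) ℝ) :
    y ⬝ᵥ (c • M).mulVec y = c * (y ⬝ᵥ M.mulVec y) := by
  rw [Matrix.smul_mulVec, dotProduct_smul, smul_eq_mul]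

private lemma aux_update_mem_Icc {n : ℕ} {a b q : Fin n → ℝ} (hq : q ∈ Set.Icc a b)
    (i : Fin n) {t : ℝ} (ht : t ∈ Set.Icc (a i) (b i)) :
    Function.update q i t ∈ Set.Icc a b := by
  constructor <;> intro j <;> by_cases hji : j = i
  · subst hji; rw [Function.update_self]; exact ht.1
  · rw [Function.update_of_ne hji]; exact hq.1 j
  · subst hji; rw [Function.update_self]; exact ht.2
  · rw [Function.update_of_ne hji]; exact hq.2 j

theorem cubic_matrix_quadform_max_at_vertex (n m : ℕ) (a b : Fin n → ℝ) (hab : a ≤ b)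
    (Q0 : Matrix (Fin m) (Fin m) ℝ) (Q1 : Fin n → Matrix (Fin m) (Fin m) ℝ)
    (Q2 : Fin n → Fin n → Matrix (Fin m) (Fin m) ℝ)
    (Q3 : Fin n → Fin n → Fin n → Matrix (Fin m) (Fin m) ℝ)
    (hsym0 : Q0.IsSymm) (hsym1 : ∀ i, (Q1 i).IsSymm)
    (hsym2 : ∀ i j, (Q2 i j).IsSymm) (hsym3 : ∀ i j k, (Q3 i j k).IsSymm)
    (L : (Fin n → ℝ) → Matrix (Fin m) (Fin m) ℝ)
    (hL : ∀ p, L p = Q0 + ∑ i, p i • Q1 i + ∑ i, ∑ j, (p i * p j) • Q2 i j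
        + ∑ i, ∑ j, ∑ k, (p i * p j * p k) • Q3 i j k)
    (hconv : ∀ i : Fin n, ∀ u : Fin n → ℝ, (∀ j, u j = a j ∨ u j = b j) →
        (Q2 i i + ∑ j, u j • (Q3 j i i + Q3 i j i + Q3 i i j)).PosSemidef) :
    ∀ p ∈ Set.Icc a b, ∀ y : Fin m → ℝ,
      ∃ u : Fin n → ℝ, (∀ j, u j = a j ∨ u j = b j) ∧
        y ⬝ᵥ (L p).mulVec y ≤ y ⬝ᵥ (L u).mulVec y := by
  intro p hp y
  set c0 : ℝ := y ⬝ᵥ Q0.mulVec y with hc0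
  set c1 : Fin n → ℝ := fun i => y ⬝ᵥ (Q1 i).mulVec y with hc1
  set c2 : Fin n → Fin n → ℝ := fun i j => y ⬝ᵥ (Q2 i j).mulVec y with hc2
  set c3 : Fin n → Fin n → Fin n → ℝ := fun i j k => y ⬝ᵥ (Q3 i j k).mulVec y with hc3
  set F : (Fin n → ℝ) → ℝ := fun q => c0 + ∑ j, c1 j * q j + ∑ j, ∑ k, c2 j k * (q j * q k)
    + ∑ j, ∑ k, ∑ l, c3 j k l * (q j * q k * q l) with hF
  have hscal : ∀ q, y ⬝ᵥ (L q).mulVec y = F q := by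
    intro q
    rw [hL q, Matrix.add_mulVec, Matrix.add_mulVec, Matrix.add_mulVec,
      dotProduct_add, dotProduct_add, dotProduct_add]
    have l1 : y ⬝ᵥ (∑ i, q i • Q1 i).mulVec y = ∑ j, c1 j * q j := by
      rw [aux_dot_sum_mulVec]
      exact Finset.sum_congr rfl fun j _ => by rw [aux_dot_smul_mulVec]; ring
    have l2 : y ⬝ᵥ (∑ i, ∑ j, (q i * q j) • Q2 i j).mulVec y
        = ∑ j, ∑ k, c2 j k * (q j * q k) := by
      rw [aux_dot_sum_mulVec]
      refine Finset.sum_congr rfl fun j _ => ?_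
      rw [aux_dot_sum_mulVec]
      exact Finset.sum_congr rfl fun k _ => by rw [aux_dot_smul_mulVec]; ring
    have l3 : y ⬝ᵥ (∑ i, ∑ j, ∑ k, (q i * q j * q k) • Q3 i j k).mulVec y
        = ∑ j, ∑ k, ∑ l, c3 j k l * (q j * q k * q l) := by
      rw [aux_dot_sum_mulVec]
      refine Finset.sum_congr rfl fun j _ => ?_
      rw [aux_dot_sum_mulVec]
      refine Finset.sum_congr rfl fun k _ => ?_
      rw [aux_dot_sum_mulVec]
      exact Finset.sum_congr rfl fun l _ => by rw [aux_dot_smul_mulVec]; ring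
    rw [l1, l2, l3]
  have hvert : ∀ i : Fin n, ∀ u : Fin n → ℝ, (∀ j, u j = a j ∨ u j = b j) →
      0 ≤ c2 i i + ∑ j, u j * (c3 j i i + c3 i j i + c3 i i j) := by
    intro i u hu
    have h := (hconv i u hu).dotProduct_mulVec_nonneg y
    have hexp : y ⬝ᵥ (Q2 i i + ∑ j, u j • (Q3 j i i + Q3 i j i + Q3 i i j)).mulVec y
        = c2 i i + ∑ j, u j * (c3 j i i + c3 i j i + c3 i i j) := by
      rw [Matrix.add_mulVec, dotProduct_add, aux_dot_sum_mulVec]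
      congr 1
      refine Finset.sum_congr rfl fun j _ => ?_
      rw [aux_dot_smul_mulVec, Matrix.add_mulVec, Matrix.add_mulVec,
        dotProduct_add, dotProduct_add]
    rw [← hexp]
    simpa using h
  have hkey := aux_exists_vertex_ge a b hab F ?_ p hp
  · obtain ⟨u, hu, hle⟩ := hkey
    exact ⟨u, hu, by rw [hscal p, hscal u]; exact hle⟩
  · intro q hq i hia hib
    set D : ℝ := c3 i i i with hD
    set Cq : ℝ := c2 i i + ∑ j, (c3 j i i + c3 i j i + c3 i i j) * q j with hCq
    set Bq : ℝ := c1 i + ∑ j, (c2 i j + c2 j i) * q j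
      + ∑ j, ∑ k, (c3 i j k + c3 j i k + c3 j k i) * (q j * q k) with hBq
    set A' : ℝ := F q - Bq * q i + Cq * (q i)^2 - D * (q i)^3 with hA'
    set B' : ℝ := Bq - 2*Cq*(q i) + 3*D*(q i)^2 with hB'
    set C' : ℝ := Cq - 3*D*(q i) with hC'
    have hg : ∀ t, F (Function.update q i t) = A' + B'*t + C'*t^2 + D*t^3 := by
      intro t
      show (c0 + ∑ j, c1 j * Function.update q i t j
        + ∑ j, ∑ k, c2 j k * (Function.update q i t j * Function.update q i t k)
        + ∑ j, ∑ k, ∑ l, c3 j k l * (Function.update q i t j * Function.update q i t k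
            * Function.update q i t l)) = A' + B'*t + C'*t^2 + D*t^3
      rw [aux_expand_cubic c0 c1 c2 c3 q i t, hA', hB', hC', hD, hBq, hCq, hF]
      ring
    have h2 : ∀ t ∈ Set.Icc (a i) (b i), 0 ≤ 2*C' + 6*D*t := by
      intro t ht
      have hmem : Function.update q i t ∈ Set.Icc a b := aux_update_mem_Icc hq i ht
      have haff := aux_affine_nonneg a b hab (c2 i i)
        (fun j => c3 j i i + c3 i j i + c3 i i j) (hvert i) (Function.update q i t) hmem
      rw [aux_sum_update_linear q i t (fun j => c3 j i i + c3 i j i + c3 i i j)] at haff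
      have hql : ∑ j, q j * (c3 j i i + c3 i j i + c3 i i j)
          = ∑ j, (c3 j i i + c3 i j i + c3 i i j) * q j :=
        Finset.sum_congr rfl fun j _ => mul_comm _ _
      rw [hql] at haff
      have heq : 2*C' + 6*D*t = 2*(c2 i i + ((∑ j, (c3 j i i + c3 i j i + c3 i i j) * q j)
          + (t - q i) * (c3 i i i + c3 i i i + c3 i i i))) := by
        rw [hC', hCq, hD]; ring
      rw [heq]
      linarith [haff]
    have hqi : q i ∈ Set.Icc (a i) (b i) := ⟨hq.1 i, hq.2 i⟩
    have hmax := aux_cubic_le_max A' B' C' D (a i) (b i) (hab i) h2 (q i) hqi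
    have hFq : F q = A' + B'*(q i) + C'*(q i)^2 + D*(q i)^3 := by
      rw [← hg (q i), Function.update_eq_self]
    rcases le_max_iff.mp (hFq ▸ hmax) with h | h
    · exact ⟨a i, Or.inl rfl, by rw [hg (a i)]; exact h⟩
    · exact ⟨b i, Or.inr rfl, by rw [hg (b i)]; exact h⟩
end

section
/- Let L : ℝⁿ → 𝕊^m be a cubic symmetric-matrix polynomial on a hyper-rectangle P with vertex set 𝒫 satisfying the partial-convexity condition Q_{ii} + Σⱼ (Q_{jii}+Q_{iji}+Q_{iij}) uⱼ ⪰ 0 for all i and all u ∈ 𝒫. If L(u) ≺ 0 (negative definite) for every vertex u ∈ 𝒫, then L(p) ≺ 0 for every p ∈ P. -/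
open Finset Matrix


private lemma cubic_le_max (A B C D τ α β : ℝ) (hαβ : α ≤ β)
    (hC : ∀ t ∈ Set.Icc α β, 0 ≤ 2*C + 6*D*(t-τ)) (t : ℝ) (ht : t ∈ Set.Icc α β) :
    A + B*(t-τ) + C*(t-τ)^2 + D*(t-τ)^3 ≤
      max (A + B*(α-τ) + C*(α-τ)^2 + D*(α-τ)^3) (A + B*(β-τ) + C*(β-τ)^2 + D*(β-τ)^3) := by
  set g : ℝ → ℝ := fun s => A + B*(s-τ) + C*(s-τ)^2 + D*(s-τ)^3 with hg
  have hder : ∀ x : ℝ, HasDerivAt g (B + 2*C*(x-τ) + 3*D*(x-τ)^2) x := by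
    intro x
    have hi : HasDerivAt (fun s : ℝ => s - τ) 1 x := (hasDerivAt_id x).sub_const τ
    have h := (((hi.const_mul B).const_add A).add ((hi.pow 2).const_mul C)).add
      ((hi.pow 3).const_mul D)
    exact h.congr_deriv (by push_cast; ring)
  have hder2 : ∀ x : ℝ, HasDerivAt (fun s : ℝ => B + 2*C*(s-τ) + 3*D*(s-τ)^2)
      (2*C + 6*D*(x-τ)) x := by
    intro x
    have hi : HasDerivAt (fun s : ℝ => s - τ) 1 x := (hasDerivAt_id x).sub_const τ
    have h := ((hi.const_mul (2*C)).const_add B).add ((hi.pow 2).const_mul (3*D))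
    exact h.congr_deriv (by push_cast; ring)
  have hcon : ConvexOn ℝ (Set.Icc α β) g := by
    refine convexOn_of_hasDerivWithinAt2_nonneg (convex_Icc α β)
      (Continuous.continuousOn (by fun_prop))
      (fun x hx => (hder x).hasDerivWithinAt)
      (fun x hx => (hder2 x).hasDerivWithinAt)
      (fun x hx => hC x (interior_subset hx))
  exact hcon.le_on_segment (Set.left_mem_Icc.2 hαβ) (Set.right_mem_Icc.2 hαβ)
    (by rwa [segment_eq_Icc hαβ])

private lemma update_mem_Icc {n : ℕ} {a b p : Fin n → ℝ} {i : Fin n} {t : ℝ}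
    (hp : p ∈ Set.Icc a b) (ht : t ∈ Set.Icc (a i) (b i)) :
    Function.update p i t ∈ Set.Icc a b := by
  refine ⟨Pi.le_def.2 fun j => ?_, Pi.le_def.2 fun j => ?_⟩ <;>
    rcases eq_or_ne j i with rfl | h
  · rw [Function.update_self]; exact ht.1
  · rw [Function.update_of_ne h]; exact hp.1 j
  · rw [Function.update_self]; exact ht.2
  · rw [Function.update_of_ne h]; exact hp.2 j

private lemma vertex_reduce {n : ℕ} (a b : Fin n → ℝ) (hab : a ≤ b) (f : (Fin n → ℝ) → ℝ)
    (H : ∀ p ∈ Set.Icc a b, ∀ i, f p ≤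
      max (f (Function.update p i (a i))) (f (Function.update p i (b i)))) :
    ∀ p ∈ Set.Icc a b, ∃ u, (∀ j, u j = a j ∨ u j = b j) ∧ f p ≤ f u := by
  have key : ∀ S : Finset (Fin n), ∀ p ∈ Set.Icc a b, (∀ j, j ∉ S → p j = a j ∨ p j = b j) →
      ∃ u, (∀ j, u j = a j ∨ u j = b j) ∧ f p ≤ f u := by
    intro S
    induction S using Finset.induction_on with
    | empty => exact fun p hp h => ⟨p, fun j => h j (Finset.notMem_empty j), le_rfl⟩
    | @insert i S hiS ih =>
      intro p hp h
      have hmax := H p hp i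
      have hex : ∃ t, (t = a i ∨ t = b i) ∧ f p ≤ f (Function.update p i t) := by
        rcases max_cases (f (Function.update p i (a i))) (f (Function.update p i (b i))) with
          ⟨h1, _⟩ | ⟨h1, _⟩
        · exact ⟨a i, Or.inl rfl, h1 ▸ hmax⟩
        · exact ⟨b i, Or.inr rfl, h1 ▸ hmax⟩
      obtain ⟨t, ht, hle⟩ := hex
      have hti : t ∈ Set.Icc (a i) (b i) := by
        rcases ht with rfl | rfl
        exacts [Set.left_mem_Icc.2 (hab i), Set.right_mem_Icc.2 (hab i)]
      have hout : ∀ j, j ∉ S → Function.update p i t j = a j ∨ Function.update p i t j = b j := by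
        intro j hj
        rcases eq_or_ne j i with rfl | hne
        · rw [Function.update_self]; exact ht
        · rw [Function.update_of_ne hne]
          exact h j (by simp [Finset.mem_insert, hne, hj])
      obtain ⟨u, hu, hle2⟩ := ih (Function.update p i t) (update_mem_Icc hp hti) hout
      exact ⟨u, hu, hle.trans hle2⟩
  exact fun p hp => key Finset.univ p hp (fun j hj => absurd (Finset.mem_univ j) hj)

private lemma sum_upd1 {n : ℕ} (p : Fin n → ℝ) (i : Fin n) (t : ℝ) (c : Fin n → ℝ) :
    ∑ j, Function.update p i t j * c j = (∑ j, p j * c j) + (t - p i) * c i := by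
  have h : ∀ j ∈ Finset.univ, Function.update p i t j * c j
      = p j * c j + (if j = i then (t - p i) * c i else 0) := by
    intro j _
    rcases eq_or_ne j i with rfl | hj
    · rw [Function.update_self]; simp; ring
    · rw [Function.update_of_ne hj]; simp [hj]
  rw [Finset.sum_congr rfl h, Finset.sum_add_distrib, Finset.sum_ite_eq' Finset.univ i]
  simp

private lemma mulsum2 {n : ℕ} (p : Fin n → ℝ) (c : Fin n → Fin n → ℝ) :
    ∑ j, p j * ∑ k, p k * c j k = ∑ j, ∑ k, p j * p k * c j k :=
  Finset.sum_congr rfl fun j _ => by rw [Finset.mul_sum]; exact Finset.sum_congr rfl fun k _ => by ring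

private lemma sum_upd2 {n : ℕ} (p : Fin n → ℝ) (i : Fin n) (t : ℝ) (c : Fin n → Fin n → ℝ) :
    ∑ j, ∑ k, Function.update p i t j * Function.update p i t k * c j k
      = (∑ j, ∑ k, p j * p k * c j k)
        + (t - p i) * ((∑ k, p k * c i k) + (∑ j, p j * c j i))
        + (t - p i)^2 * c i i := by
  set q := Function.update p i t with hq
  have inner : ∀ j ∈ Finset.univ, ∑ k, q j * q k * c j k
      = q j * (∑ k, p k * c j k) + (t - p i) * (q j * c j i) := by
    intro j _
    have e1 : ∑ k, q j * q k * c j k = ∑ k, q k * (q j * c j k) :=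
      Finset.sum_congr rfl fun k _ => by ring
    rw [e1, sum_upd1 p i t (fun k => q j * c j k)]
    have : ∑ k, p k * (q j * c j k) = q j * ∑ k, p k * c j k := by
      rw [Finset.mul_sum]; exact Finset.sum_congr rfl fun k _ => by ring
    rw [this]
  rw [Finset.sum_congr rfl inner, Finset.sum_add_distrib]
  have e2 : ∑ j, q j * (∑ k, p k * c j k)
      = (∑ j, p j * ∑ k, p k * c j k) + (t - p i) * (∑ k, p k * c i k) :=
    sum_upd1 p i t (fun j => ∑ k, p k * c j k)
  have e3 : ∑ j, (t - p i) * (q j * c j i) = (t - p i) * ((∑ j, p j * c j i) + (t - p i) * c i i) := by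
    rw [← Finset.mul_sum, sum_upd1 p i t (fun j => c j i)]
  rw [e2, e3, mulsum2]
  ring
private lemma mulsum3 {n : ℕ} (p : Fin n → ℝ) (c : Fin n → Fin n → Fin n → ℝ) :
    ∑ j, ∑ k, p j * p k * ∑ l, p l * c j k l = ∑ j, ∑ k, ∑ l, p j * p k * p l * c j k l :=
  Finset.sum_congr rfl fun j _ => Finset.sum_congr rfl fun k _ => by
    rw [Finset.mul_sum]; exact Finset.sum_congr rfl fun l _ => by ring

private lemma sum_upd3 {n : ℕ} (p : Fin n → ℝ) (i : Fin n) (t : ℝ) (c : Fin n → Fin n → Fin n → ℝ) :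
    ∑ j, ∑ k, ∑ l, Function.update p i t j * Function.update p i t k * Function.update p i t l * c j k l
      = (∑ j, ∑ k, ∑ l, p j * p k * p l * c j k l)
        + (t - p i) * ((∑ k, ∑ l, p k * p l * c i k l) + (∑ j, ∑ l, p j * p l * c j i l)
            + (∑ j, ∑ k, p j * p k * c j k i))
        + (t - p i)^2 * ((∑ l, p l * c i i l) + (∑ k, p k * c i k i) + (∑ j, p j * c j i i))
        + (t - p i)^3 * c i i i := by
  set q := Function.update p i t with hq
  have inner : ∀ j ∈ Finset.univ, ∀ k ∈ Finset.univ, ∑ l, q j * q k * q l * c j k l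
      = q j * q k * (∑ l, p l * c j k l) + (t - p i) * (q j * q k * c j k i) := by
    intro j _ k _
    have e1 : ∑ l, q j * q k * q l * c j k l = ∑ l, q l * (q j * q k * c j k l) :=
      Finset.sum_congr rfl fun l _ => by ring
    rw [e1, sum_upd1 p i t (fun l => q j * q k * c j k l)]
    have : ∑ l, p l * (q j * q k * c j k l) = q j * q k * ∑ l, p l * c j k l := by
      rw [Finset.mul_sum]; exact Finset.sum_congr rfl fun l _ => by ring
    rw [this]
  have step1 : ∑ j, ∑ k, ∑ l, q j * q k * q l * c j k l
      = (∑ j, ∑ k, q j * q k * (∑ l, p l * c j k l))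
        + (t - p i) * (∑ j, ∑ k, q j * q k * c j k i) := by
    rw [Finset.mul_sum]
    rw [← Finset.sum_add_distrib]
    refine Finset.sum_congr rfl fun j hj => ?_
    rw [Finset.mul_sum, ← Finset.sum_add_distrib]
    rw [Finset.sum_congr rfl (inner j hj)]
  rw [step1, sum_upd2 p i t (fun j k => ∑ l, p l * c j k l), sum_upd2 p i t (fun j k => c j k i)]
  rw [mulsum3]
  have e4 : ∑ k, p k * ∑ l, p l * c i k l = ∑ k, ∑ l, p k * p l * c i k l := mulsum2 p (fun k l => c i k l)
  have e5 : ∑ j, p j * ∑ l, p l * c j i l = ∑ j, ∑ l, p j * p l * c j i l := mulsum2 p (fun j l => c j i l)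
  rw [e4, e5]
  ring

private lemma cubic_le_max' (g : ℝ → ℝ) (A B C D τ α β : ℝ) (hαβ : α ≤ β)
    (hg : ∀ t, g t = A + B*(t-τ) + C*(t-τ)^2 + D*(t-τ)^3)
    (hC : ∀ t ∈ Set.Icc α β, 0 ≤ 2*C + 6*D*(t-τ)) (t : ℝ) (ht : t ∈ Set.Icc α β) :
    g t ≤ max (g α) (g β) := by
  rw [hg t, hg α, hg β]
  exact cubic_le_max A B C D τ α β hαβ hC t ht

private lemma scalar_box {n : ℕ} (a b : Fin n → ℝ) (hab : a ≤ b)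
    (c1 : Fin n → ℝ) (c2 : Fin n → Fin n → ℝ) (c3 : Fin n → Fin n → Fin n → ℝ)
    (c0 : ℝ) (F : (Fin n → ℝ) → ℝ)
    (hF : ∀ p, F p = c0 + (∑ i, p i * c1 i) + (∑ i, ∑ j, p i * p j * c2 i j)
        + (∑ i, ∑ j, ∑ k, p i * p j * p k * c3 i j k))
    (hc : ∀ i, ∀ u : Fin n → ℝ, (∀ j, u j = a j ∨ u j = b j) →
        0 ≤ c2 i i + ∑ j, u j * (c3 j i i + c3 i j i + c3 i i j)) :
    ∀ p ∈ Set.Icc a b, ∃ u, (∀ j, u j = a j ∨ u j = b j) ∧ F p ≤ F u := by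
  have haff : ∀ i : Fin n, ∀ p ∈ Set.Icc a b,
      0 ≤ c2 i i + ∑ j, p j * (c3 j i i + c3 i j i + c3 i i j) := by
    intro i p hp
    have H : ∀ q ∈ Set.Icc a b, ∀ k : Fin n,
        (fun q => -(c2 i i + ∑ j, q j * (c3 j i i + c3 i j i + c3 i i j))) q ≤
          max ((fun q => -(c2 i i + ∑ j, q j * (c3 j i i + c3 i j i + c3 i i j)))
              (Function.update q k (a k)))
            ((fun q => -(c2 i i + ∑ j, q j * (c3 j i i + c3 i j i + c3 i i j)))
              (Function.update q k (b k))) := by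
      intro q hq k
      have hg : ∀ t : ℝ, (fun s => -(c2 i i
            + ∑ j, Function.update q k s j * (c3 j i i + c3 i j i + c3 i i j))) t
          = (-(c2 i i + ∑ j, q j * (c3 j i i + c3 i j i + c3 i i j)))
            + (-(c3 k i i + c3 i k i + c3 i i k))*(t - q k) + 0*(t - q k)^2 + 0*(t - q k)^3 := by
        intro t
        simp only
        rw [sum_upd1 q k t (fun j => c3 j i i + c3 i j i + c3 i i j)]
        ring
      have h0 := cubic_le_max' _ _ _ _ _ (q k) (a k) (b k) (hab k) hg
        (fun t _ => by norm_num) (q k) ⟨hq.1 k, hq.2 k⟩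
      simpa [Function.update_eq_self] using h0
    obtain ⟨u, hu, hle⟩ := vertex_reduce a b hab _ H p hp
    have h2 := hc i u hu
    linarith
  intro p hp
  have Hmain : ∀ q ∈ Set.Icc a b, ∀ i : Fin n, F q ≤
      max (F (Function.update q i (a i))) (F (Function.update q i (b i))) := by
    intro q hq i
    have hg : ∀ t : ℝ, (fun s => F (Function.update q i s)) t
        = F q
          + (c1 i + ((∑ k, q k * c2 i k) + (∑ j, q j * c2 j i))
            + ((∑ k, ∑ l, q k * q l * c3 i k l) + (∑ j, ∑ l, q j * q l * c3 j i l)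
              + (∑ j, ∑ k, q j * q k * c3 j k i))) * (t - q i)
          + (c2 i i + ((∑ l, q l * c3 i i l) + (∑ k, q k * c3 i k i) + (∑ j, q j * c3 j i i)))
            * (t - q i)^2
          + (c3 i i i) * (t - q i)^3 := by
      intro t
      simp only
      rw [hF (Function.update q i t), hF q, sum_upd1 q i t c1, sum_upd2 q i t c2,
        sum_upd3 q i t c3]
      ring
    have hC : ∀ t ∈ Set.Icc (a i) (b i),
        0 ≤ 2*(c2 i i + ((∑ l, q l * c3 i i l) + (∑ k, q k * c3 i k i) + (∑ j, q j * c3 j i i)))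
          + 6*(c3 i i i)*(t - q i) := by
      intro t ht
      have h1 := haff i (Function.update q i t) (update_mem_Icc hq ht)
      rw [sum_upd1 q i t (fun j => c3 j i i + c3 i j i + c3 i i j)] at h1
      have e : ∑ j, q j * (c3 j i i + c3 i j i + c3 i i j)
          = (∑ j, q j * c3 j i i) + (∑ j, q j * c3 i j i) + (∑ j, q j * c3 i i j) := by
        simp [mul_add, Finset.sum_add_distrib]
      rw [e] at h1
      linarith
    have h0 := cubic_le_max' _ _ _ _ _ (q i) (a i) (b i) (hab i) hg hC (q i) ⟨hq.1 i, hq.2 i⟩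
    simpa [Function.update_eq_self] using h0
  exact vertex_reduce a b hab F Hmain p hp

private lemma dot_sum_mulVec {m ι : Type*} [Fintype m] (s : Finset ι)
    (M : ι → Matrix m m ℝ) (x : m → ℝ) :
    x ⬝ᵥ (∑ i ∈ s, M i) *ᵥ x = ∑ i ∈ s, x ⬝ᵥ (M i) *ᵥ x := by
  induction s using Finset.cons_induction with
  | empty => simp [Matrix.zero_mulVec]
  | cons i s hi ih => simp [Finset.sum_cons, Matrix.add_mulVec, dotProduct_add, ih]

theorem cubic_matrix_negdef_on_box_of_negdef_at_vertices (n m : ℕ)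
    (a b : Fin n → ℝ) (hab : a ≤ b)
    (Q0 : Matrix (Fin m) (Fin m) ℝ) (Q1 : Fin n → Matrix (Fin m) (Fin m) ℝ)
    (Q2 : Fin n → Fin n → Matrix (Fin m) (Fin m) ℝ)
    (Q3 : Fin n → Fin n → Fin n → Matrix (Fin m) (Fin m) ℝ)
    (hsym0 : Q0.IsSymm) (hsym1 : ∀ i, (Q1 i).IsSymm)
    (hsym2 : ∀ i j, (Q2 i j).IsSymm) (hsym3 : ∀ i j k, (Q3 i j k).IsSymm)
    (L : (Fin n → ℝ) → Matrix (Fin m) (Fin m) ℝ)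
    (hL : ∀ p, L p = Q0 + ∑ i, p i • Q1 i + ∑ i, ∑ j, (p i * p j) • Q2 i j
        + ∑ i, ∑ j, ∑ k, (p i * p j * p k) • Q3 i j k)
    (hconv : ∀ i : Fin n, ∀ u : Fin n → ℝ, (∀ j, u j = a j ∨ u j = b j) →
        (Q2 i i + ∑ j, u j • (Q3 j i i + Q3 i j i + Q3 i i j)).PosSemidef)
    (hvert : ∀ u : Fin n → ℝ, (∀ j, u j = a j ∨ u j = b j) → (-(L u)).PosDef) :
    ∀ p ∈ Set.Icc a b, (-(L p)).PosDef := by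
  intro p hp
  have e1 : ∀ i, (Q1 i)ᵀ = Q1 i := fun i => (hsym1 i).eq
  have e2 : ∀ i j, (Q2 i j)ᵀ = Q2 i j := fun i j => (hsym2 i j).eq
  have e3 : ∀ i j k, (Q3 i j k)ᵀ = Q3 i j k := fun i j k => (hsym3 i j k).eq
  have hLsym : (L p)ᵀ = L p := by
    rw [hL p]
    simp [Matrix.transpose_add, Matrix.transpose_sum, Matrix.transpose_smul,
      hsym0.eq, e1, e2, e3]
  refine Matrix.PosDef.of_dotProduct_mulVec_pos ?_ ?_
  · rw [Matrix.IsHermitian, Matrix.conjTranspose_eq_transpose_of_trivial,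
      Matrix.transpose_neg, hLsym]
  intro x hx
  have hsx : star x = x := by
    funext i; exact star_trivial _
  have hFx : ∀ q : Fin n → ℝ, x ⬝ᵥ (L q) *ᵥ x
      = (x ⬝ᵥ Q0 *ᵥ x) + (∑ i, q i * (x ⬝ᵥ (Q1 i) *ᵥ x))
        + (∑ i, ∑ j, q i * q j * (x ⬝ᵥ (Q2 i j) *ᵥ x))
        + (∑ i, ∑ j, ∑ k, q i * q j * q k * (x ⬝ᵥ (Q3 i j k) *ᵥ x)) := by
    intro q
    rw [hL q]
    simp [Matrix.add_mulVec, dot_sum_mulVec, Matrix.smul_mulVec,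
      dotProduct_add, dotProduct_smul, smul_eq_mul, mul_assoc]
  have hc : ∀ i, ∀ u : Fin n → ℝ, (∀ j, u j = a j ∨ u j = b j) →
      0 ≤ (x ⬝ᵥ (Q2 i i) *ᵥ x) + ∑ j, u j * ((x ⬝ᵥ (Q3 j i i) *ᵥ x) + (x ⬝ᵥ (Q3 i j i) *ᵥ x)
        + (x ⬝ᵥ (Q3 i i j) *ᵥ x)) := by
    intro i u hu
    have h := (hconv i u hu).dotProduct_mulVec_nonneg x
    rw [hsx] at h
    simpa [Matrix.add_mulVec, dot_sum_mulVec, Matrix.smul_mulVec,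
      dotProduct_add, dotProduct_smul, smul_eq_mul, mul_add] using h
  obtain ⟨u, hu, hle⟩ := scalar_box a b hab (fun i => x ⬝ᵥ (Q1 i) *ᵥ x)
    (fun i j => x ⬝ᵥ (Q2 i j) *ᵥ x) (fun i j k => x ⬝ᵥ (Q3 i j k) *ᵥ x)
    (x ⬝ᵥ Q0 *ᵥ x) (fun q => x ⬝ᵥ (L q) *ᵥ x) hFx hc p hp
  have hneg : x ⬝ᵥ (L u) *ᵥ x < 0 := by
    have h := (hvert u hu).dotProduct_mulVec_pos hx
    rw [hsx, Matrix.neg_mulVec, dotProduct_neg] at h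
    linarith
  rw [hsx, Matrix.neg_mulVec, dotProduct_neg]
  linarith
end

section
/- Suppose the conditions: (a) Aᵢᵀ K(p+v) Aᵢ ⪰ 0 for all p ∈ P, v ∈ V (which holds whenever K(w) ⪰ 0 on P+V), and (b) A(u)ᵀKᵢAᵢ + AᵢᵀKᵢA(u) ⪰ 0 for all vertices u ∈ 𝒫 and all i. Then for each fixed v, the function p ↦ L_d(p, v, ε) = A(p)ᵀ[K(p)+K(v)−K₀]A(p) − (1−ε)K(p) is partially convex on P, i.e., ∂²L_d/∂pᵢ² ⪰ 0 on P for every i. -/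
open Finset Matrix

lemma aux_sum_mulVec {ι n : Type*} [Fintype n] (s : Finset ι)
    (M : ι → Matrix n n ℝ) (x : n → ℝ) :
    (∑ j ∈ s, M j) *ᵥ x = ∑ j ∈ s, M j *ᵥ x := by
  ext k
  simp only [Matrix.mulVec, dotProduct, Matrix.sum_apply, Finset.sum_mul]
  rw [Finset.sum_comm]
  simp [Matrix.mulVec, dotProduct, Finset.sum_apply]

lemma aux_dot_sum {ι n : Type*} [Fintype n] (s : Finset ι)
    (v : ι → n → ℝ) (x : n → ℝ) :
    x ⬝ᵥ (∑ j ∈ s, v j) = ∑ j ∈ s, x ⬝ᵥ v j := by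
  simp only [dotProduct, Finset.sum_apply, Finset.mul_sum]
  exact Finset.sum_comm

theorem dt_lyapunov_partial_convexity (n : ℕ)
    (a b : Fin n → ℝ) (hab : a ≤ b)
    (A0 K0 : Matrix (Fin n) (Fin n) ℝ)
    (A K : Fin n → Matrix (Fin n) (Fin n) ℝ)
    (hsym0 : K0.IsSymm) (hsym : ∀ i, (K i).IsSymm)
    (ε : ℝ) (hε0 : 0 < ε) (hε1 : ε < 1)
    (V : Set (Fin n → ℝ))
    (Amat Kmat : (Fin n → ℝ) → Matrix (Fin n) (Fin n) ℝ)
    (hA : ∀ p, Amat p = A0 + ∑ j, p j • A j)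
    (hK : ∀ p, Kmat p = K0 + ∑ j, p j • K j)
    (ha : ∀ p ∈ Set.Icc a b, ∀ v ∈ V, ∀ i : Fin n,
      ((A i)ᵀ * Kmat (p + v) * A i).PosSemidef)
    (hb : ∀ u : Fin n → ℝ, (∀ j, u j = a j ∨ u j = b j) → ∀ i : Fin n,
      ((Amat u)ᵀ * K i * A i + (A i)ᵀ * K i * Amat u).PosSemidef) :
    ∀ p ∈ Set.Icc a b, ∀ v ∈ V, ∀ i : Fin n,
      ((2 : ℝ) • ((A i)ᵀ * (Kmat p + Kmat v - K0) * A i)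
        + (2 : ℝ) • ((Amat p)ᵀ * K i * A i + (A i)ᵀ * K i * Amat p)).PosSemidef := by
  intro p hp v hv i
  -- affinity of K
  have hKaff : Kmat p + Kmat v - K0 = Kmat (p + v) := by
    simp only [hK, Pi.add_apply, add_smul, Finset.sum_add_distrib]
    abel
  have h1 : ((A i)ᵀ * (Kmat p + Kmat v - K0) * A i).PosSemidef := by
    rw [hKaff]; exact ha p hp v hv i
  -- affine decomposition of the second term
  set C : Matrix (Fin n) (Fin n) ℝ := A0ᵀ * K i * A i + (A i)ᵀ * K i * A0 with hC
  set D : Fin n → Matrix (Fin n) (Fin n) ℝ :=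
    fun j => (A j)ᵀ * K i * A i + (A i)ᵀ * K i * A j with hD
  have hdecomp : ∀ q : Fin n → ℝ,
      (Amat q)ᵀ * K i * A i + (A i)ᵀ * K i * Amat q = C + ∑ j, q j • D j := by
    intro q
    simp only [hA, transpose_add, Matrix.transpose_sum, transpose_smul,
      add_mul, mul_add, Finset.sum_mul, Finset.mul_sum, smul_mul_assoc,
      Matrix.mul_smul, hC, hD, smul_add, Finset.sum_add_distrib]
    abel
  have hq : ∀ (q : Fin n → ℝ) (x : Fin n → ℝ),
      x ⬝ᵥ ((C + ∑ j, q j • D j) *ᵥ x)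
        = x ⬝ᵥ (C *ᵥ x) + ∑ j, q j * (x ⬝ᵥ (D j *ᵥ x)) := by
    intro q x
    rw [Matrix.add_mulVec, dotProduct_add, aux_sum_mulVec, aux_dot_sum]
    congr 1
    refine Finset.sum_congr rfl fun j _ => ?_
    rw [smul_mulVec, dotProduct_smul, smul_eq_mul]
  have h2 : ((Amat p)ᵀ * K i * A i + (A i)ᵀ * K i * Amat p).PosSemidef := by
    refine posSemidef_iff_dotProduct_mulVec.mpr ⟨?_, ?_⟩
    · -- Hermitian
      rw [Matrix.IsHermitian, conjTranspose_eq_transpose_of_trivial]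
      have hKi : (K i)ᵀ = K i := hsym i
      simp only [Matrix.transpose_add, Matrix.transpose_mul, Matrix.transpose_transpose, hKi,
        Matrix.mul_assoc]
      exact add_comm _ _
    · intro x
      rw [star_trivial]
      set d : Fin n → ℝ := fun j => x ⬝ᵥ (D j *ᵥ x) with hd
      set u : Fin n → ℝ := fun j => if 0 ≤ d j then a j else b j with hu
      have huv : ∀ j, u j = a j ∨ u j = b j := by
        intro j; by_cases h : 0 ≤ d j <;> simp [hu, h]
      have hvert := (hb u huv i).dotProduct_mulVec_nonneg x
      rw [star_trivial, hdecomp u, hq] at hvert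
      rw [hdecomp p, hq]
      refine le_trans hvert (add_le_add_right (Finset.sum_le_sum fun j _ => ?_) _)
      by_cases h : 0 ≤ d j
      · simp only [hu, if_pos h]
        exact mul_le_mul_of_nonneg_right (hp.1 j) h
      · simp only [hu, if_neg h]
        exact mul_le_mul_of_nonpos_right (hp.2 j) (le_of_not_ge h)
  have hsum := (h1.add h1).add (h2.add h2)
  rw [two_smul ℝ, two_smul ℝ]
  exact hsum
end
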